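/- arXiv:2303.07874 — 5 statements merged into one kernel-verified Lean document; each statement's English description precedes it below -/
import Mathlib

section
/- Let x_1,...,x_k be real numbers and let X_i = x_1 + ... + x_i denote the partial sums. Then the sum of X_i^2 over i = 1,...,k is at least (1/8) times the sum of x_i^2 over i = 1,...,k. -/
theorem stmt_0 (k : ℕ) (x : ℕ → ℝ) :
    ∑ i ∈ Finset.range k, (∑ j ∈ Finset.range (i + 1), x j) ^ 2 ≥
      (1 / 8) * ∑ i ∈ Finset.range k, (x i) ^ 2 := by
  set S : ℕ → ℝ := fun i => ∑ j ∈ Finset.range i, x j with hS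
  have key : ∀ i, (x i) ^ 2 ≤ 2 * (S (i + 1)) ^ 2 + 2 * (S i) ^ 2 := by
    intro i
    have hx : x i = S (i + 1) - S i := by
      simp [hS, Finset.sum_range_succ]
    rw [hx]; nlinarith [sq_nonneg (S (i + 1) + S i)]
  have h1 : ∑ i ∈ Finset.range k, (x i) ^ 2 ≤
      2 * ∑ i ∈ Finset.range k, (S (i + 1)) ^ 2 +
        2 * ∑ i ∈ Finset.range k, (S i) ^ 2 := by
    calc ∑ i ∈ Finset.range k, (x i) ^ 2
        ≤ ∑ i ∈ Finset.range k, (2 * (S (i + 1)) ^ 2 + 2 * (S i) ^ 2) :=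
          Finset.sum_le_sum fun i _ => key i
      _ = _ := by rw [Finset.sum_add_distrib, ← Finset.mul_sum, ← Finset.mul_sum]
  have h2 : ∑ i ∈ Finset.range k, (S i) ^ 2 ≤
      ∑ i ∈ Finset.range k, (S (i + 1)) ^ 2 := by
    cases k with
    | zero => simp
    | succ n =>
      rw [Finset.sum_range_succ']
      have hS0 : (S 0) ^ 2 = 0 := by simp [hS]
      rw [hS0, add_zero]
      apply Finset.sum_le_sum_of_subset_of_nonneg
      · exact Finset.range_subset_range.mpr (Nat.le_succ n)
      · intro i _ _; positivity
  have hT : (0:ℝ) ≤ ∑ i ∈ Finset.range k, (S (i + 1)) ^ 2 :=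
    Finset.sum_nonneg fun i _ => sq_nonneg _
  have hgoal : ∑ i ∈ Finset.range k, (∑ j ∈ Finset.range (i + 1), x j) ^ 2 =
      ∑ i ∈ Finset.range k, (S (i + 1)) ^ 2 := rfl
  rw [ge_iff_le, hgoal]
  linarith
end

section
/- Let f(x) = \sum_{i=1}^k w_i [x - b_i]_+ where 0 \leq b_1 \leq ... \leq b_k \leq 1 and [t]_+ = max(t,0). Let W_i = w_1 + ... + w_i and set b_{k+1} = 1. Then \int_0^1 f(x)^2 dx \geq (1/12) \sum_{i=1}^k W_i^2 (b_{i+1} - b_i)^3. -/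
open MeasureTheory Finset

lemma keylin (a c u v : ℝ) (h : u ≤ v) :
    (∫ x in u..v, (a * x + c) ^ 2) ≥ a ^ 2 * (v - u) ^ 3 / 12 := by
  have hcont : Continuous fun x : ℝ => (a * x + c) ^ 2 := by continuity
  have hder : ∀ x ∈ Set.uIcc u v,
      HasDerivAt (fun y : ℝ => a ^ 2 / 3 * y ^ 3 + a * c * y ^ 2 + c ^ 2 * y)
        ((a * x + c) ^ 2) x := by
    intro x _
    have h1 : HasDerivAt (fun y : ℝ => a ^ 2 / 3 * y ^ 3 + a * c * y ^ 2 + c ^ 2 * y)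
        (a ^ 2 / 3 * (3 * x ^ 2) + a * c * (2 * x ^ 1) + c ^ 2 * 1) x := by
      exact (((hasDerivAt_pow 3 x).const_mul (a ^ 2 / 3)).add
        ((hasDerivAt_pow 2 x).const_mul (a * c))).add ((hasDerivAt_id x).const_mul (c ^ 2))
    convert h1 using 1
    ring
  have heq := intervalIntegral.integral_eq_sub_of_hasDerivAt hder (hcont.intervalIntegrable u v)
  rw [heq]
  nlinarith [sq_nonneg (a * (u + v) + 2 * c), mul_nonneg (sub_nonneg.2 h) (sq_nonneg (a * (u + v) + 2 * c))]

theorem stmt_2 (k : ℕ) (w b : ℕ → ℝ)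
    (hb0 : 0 ≤ b 0) (hbk : b k = 1)
    (hmono : ∀ i j, i ≤ j → j ≤ k → b i ≤ b j) :
    ∫ x in (0:ℝ)..1, (∑ i ∈ Finset.range k, w i * max (x - b i) 0) ^ 2 ≥
      (1 / 12) * ∑ i ∈ Finset.range k,
        (∑ j ∈ Finset.range (i + 1), w j) ^ 2 * (b (i + 1) - b i) ^ 3 := by
  set f : ℝ → ℝ := fun x => ∑ i ∈ Finset.range k, w i * max (x - b i) 0 with hf
  have hcont : Continuous fun x => f x ^ 2 := by
    apply Continuous.pow
    exact continuous_finset_sum _ fun i _ =>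
      continuous_const.mul ((continuous_id.sub continuous_const).max continuous_const)
  have hii : ∀ u v : ℝ, IntervalIntegrable (fun x => f x ^ 2) volume u v :=
    fun u v => hcont.intervalIntegrable u v
  have h01 : (∫ x in (0:ℝ)..1, f x ^ 2)
      = (∫ x in (0:ℝ)..(b 0), f x ^ 2) + ∫ x in (b 0)..(b k), f x ^ 2 := by
    rw [hbk]
    exact (intervalIntegral.integral_add_adjacent_intervals (hii 0 (b 0)) (hii (b 0) 1)).symm
  have hsplit : (∫ x in (b 0)..(b k), f x ^ 2)
      = ∑ i ∈ Finset.range k, ∫ x in (b i)..(b (i + 1)), f x ^ 2 :=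
    (intervalIntegral.sum_integral_adjacent_intervals (fun i _ => hii (b i) (b (i + 1)))).symm
  have hpiece : ∀ i ∈ Finset.range k,
      (∑ j ∈ Finset.range (i + 1), w j) ^ 2 * (b (i + 1) - b i) ^ 3 / 12
        ≤ ∫ x in (b i)..(b (i + 1)), f x ^ 2 := by
    intro i hi
    have hik : i + 1 ≤ k := Finset.mem_range.1 hi
    have hle : b i ≤ b (i + 1) := hmono i (i + 1) (Nat.le_succ i) hik
    set W := ∑ j ∈ Finset.range (i + 1), w j with hW
    set c := -∑ j ∈ Finset.range (i + 1), w j * b j with hc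
    have heq : (∫ x in (b i)..(b (i + 1)), f x ^ 2)
        = ∫ x in (b i)..(b (i + 1)), (W * x + c) ^ 2 := by
      apply intervalIntegral.integral_congr
      intro x hx
      rw [Set.uIcc_of_le hle] at hx
      have h1 : f x = ∑ j ∈ Finset.range (i + 1), w j * max (x - b j) 0 := by
        rw [hf]
        symm
        apply Finset.sum_subset (Finset.range_subset_range.2 hik)
        intro j hj hj2
        have hj1 : i + 1 ≤ j := le_of_not_gt (fun h => hj2 (Finset.mem_range.2 h))
        have hjk : j ≤ k := le_of_lt (Finset.mem_range.1 hj)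
        have hxb : x ≤ b j := le_trans hx.2 (hmono (i + 1) j hj1 hjk)
        simp [max_eq_right (by linarith : x - b j ≤ 0)]
      have h2 : ∀ j ∈ Finset.range (i + 1), w j * max (x - b j) 0 = w j * x - w j * b j := by
        intro j hj
        have hj1 : j ≤ i := Nat.lt_succ_iff.1 (Finset.mem_range.1 hj)
        have hbj : b j ≤ x := le_trans (hmono j i hj1 (by omega)) hx.1
        rw [max_eq_left (by linarith : (0:ℝ) ≤ x - b j)]
        ring
      have hfx : f x = W * x + c := by
        rw [h1, Finset.sum_congr rfl h2, Finset.sum_sub_distrib, ← Finset.sum_mul, hW, hc]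
        ring
      simp only [hfx]
    rw [heq]
    exact keylin W c _ _ hle
  have h0 : 0 ≤ ∫ x in (0:ℝ)..(b 0), f x ^ 2 :=
    intervalIntegral.integral_nonneg hb0 (fun x _ => sq_nonneg _)
  have hsum : (1 / 12) * ∑ i ∈ Finset.range k,
      (∑ j ∈ Finset.range (i + 1), w j) ^ 2 * (b (i + 1) - b i) ^ 3
      = ∑ i ∈ Finset.range k,
        (∑ j ∈ Finset.range (i + 1), w j) ^ 2 * (b (i + 1) - b i) ^ 3 / 12 := by
    rw [Finset.mul_sum]
    exact Finset.sum_congr rfl fun i _ => by ring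
  have final : (∫ x in (0:ℝ)..1, f x ^ 2)
      ≥ (1 / 12) * ∑ i ∈ Finset.range k,
        (∑ j ∈ Finset.range (i + 1), w j) ^ 2 * (b (i + 1) - b i) ^ 3 := by
    rw [h01, hsplit, hsum]
    have := Finset.sum_le_sum hpiece
    linarith
  exact final
end

section
/- Let X and Y be discrete random variables with finite support, independent of each other, and let f(X,Y) be a non-negative function. Then E_X[ ln( E_Y[ exp(-f(X,Y)) ] ) ] \geq ln( E_Y[ exp( - E_X[ f(X,Y) ] ) ] ). -/
/-!
Since `exp (-∑ₐ p a * f a b) = ∏ₐ (exp (-f a b)) ^ p a`, after exponentiating the claim is the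
generalised Hölder inequality `E_Y[∏ₐ gₐ ^ pₐ] ≤ ∏ₐ (E_Y gₐ) ^ pₐ` for `gₐ = exp (-f a ·)`.
That in turn follows by applying the weighted AM-GM inequality pointwise in `b` to the
normalised functions `gₐ / E_Y gₐ` and then averaging over `Y`.
-/

open Finset Real

theorem sum_mul_prod_rpow_le_prod_rpow_sum {α β : Type*} [Fintype α] [Fintype β]
    {p : α → ℝ} {q : β → ℝ} {g : α → β → ℝ} (hp0 : ∀ a, 0 ≤ p a) (hp1 : ∑ a, p a = 1)
    (hq0 : ∀ b, 0 ≤ q b) (hg0 : ∀ a b, 0 ≤ g a b) (hS : ∀ a, 0 < ∑ b, q b * g a b) :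
    ∑ b, q b * ∏ a, g a b ^ p a ≤ ∏ a, (∑ b, q b * g a b) ^ p a := by
  set S : α → ℝ := fun a ↦ ∑ b, q b * g a b with hS_def
  have hnormalised : ∑ b, q b * ∏ a, (g a b / S a) ^ p a ≤ 1 :=
    calc ∑ b, q b * ∏ a, (g a b / S a) ^ p a
        ≤ ∑ b, q b * ∑ a, p a * (g a b / S a) := by
          gcongr with b
          · exact hq0 b
          · exact geom_mean_le_arith_mean_weighted _ _ _ (fun a _ ↦ hp0 a) hp1
              fun a _ ↦ div_nonneg (hg0 a b) (hS a).le
      _ = ∑ a, p a / S a * S a := by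
          simp only [hS_def, mul_sum]
          rw [sum_comm]
          exact sum_congr rfl fun a _ ↦ sum_congr rfl fun b _ ↦ by ring
      _ = 1 := by
          rw [← hp1]
          exact sum_congr rfl fun a _ ↦ div_mul_cancel₀ _ (hS a).ne'
  have hprod_pos : 0 < ∏ a, S a ^ p a := prod_pos fun a _ ↦ rpow_pos_of_pos (hS a) _
  rw [← div_le_one hprod_pos, sum_div]
  refine (sum_congr rfl fun b _ ↦ ?_).trans_le hnormalised
  rw [mul_div_assoc, ← prod_div_distrib]
  exact congrArg _ (prod_congr rfl fun a _ ↦ (div_rpow (hg0 a b) (hS a).le _).symm)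

theorem stmt_5_general {α β : Type*} [Fintype α] [Fintype β]
    (p : α → ℝ) (q : β → ℝ)
    (hp0 : ∀ a, 0 ≤ p a) (hq0 : ∀ b, 0 ≤ q b)
    (hp1 : ∑ a, p a = 1) (hq1 : ∑ b, q b = 1)
    (f : α → β → ℝ) :
    ∑ a, p a * Real.log (∑ b, q b * Real.exp (-(f a b))) ≥
      Real.log (∑ b, q b * Real.exp (-(∑ a, p a * f a b))) := by
  obtain ⟨b₀, -, hb₀⟩ := (sum_pos_iff_of_nonneg fun b _ ↦ hq0 b).1 (hq1 ▸ one_pos)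
  have hpos : ∀ x : β → ℝ, 0 < ∑ b, q b * exp (x b) := fun x ↦
    sum_pos' (fun b _ ↦ mul_nonneg (hq0 b) (exp_pos _).le) ⟨b₀, mem_univ _, by positivity⟩
  have hexp : ∀ b, exp (-(∑ a, p a * f a b)) = ∏ a, exp (-f a b) ^ p a := fun b ↦ by
    rw [← sum_neg_distrib, exp_sum]
    exact prod_congr rfl fun a _ ↦ by rw [← exp_mul, neg_mul, mul_comm]
  rw [ge_iff_le]
  calc log (∑ b, q b * exp (-(∑ a, p a * f a b)))
      = log (∑ b, q b * ∏ a, exp (-f a b) ^ p a) := by simp only [hexp]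
    _ ≤ log (∏ a, (∑ b, q b * exp (-f a b)) ^ p a) :=
        log_le_log (by simpa only [hexp] using hpos fun b ↦ -(∑ a, p a * f a b))
          (sum_mul_prod_rpow_le_prod_rpow_sum hp0 hp1 hq0 (fun _ _ ↦ (exp_pos _).le)
            fun _ ↦ hpos _)
    _ = ∑ a, p a * log (∑ b, q b * exp (-f a b)) := by
        rw [log_prod fun a _ ↦ (rpow_pos_of_pos (hpos _) _).ne']
        exact sum_congr rfl fun a _ ↦ log_rpow (hpos _) _

theorem stmt_5 {α β : Type*} [Fintype α] [Fintype β]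
    (p : α → ℝ) (q : β → ℝ)
    (hp0 : ∀ a, 0 ≤ p a) (hq0 : ∀ b, 0 ≤ q b)
    (hp1 : ∑ a, p a = 1) (hq1 : ∑ b, q b = 1)
    (f : α → β → ℝ) (hf : ∀ a b, 0 ≤ f a b) :
    ∑ a, p a * Real.log (∑ b, q b * Real.exp (-(f a b))) ≥
      Real.log (∑ b, q b * Real.exp (-(∑ a, p a * f a b))) :=
  stmt_5_general p q hp0 hq0 hp1 hq1 f
end

section
/- Let f_\theta(x) = \sum_{i=1}^k w_i [x - b_i]_+ with 0 \leq b_1 \leq ... \leq b_k < \infty, and suppose the L2 norm of f_\theta on [0,1] satisfies \|f_\theta\|^2 < 1/(12(k+1)^5). Then there exists a parameter vector \theta^* (with the same architecture) such that f_{\theta^*} is identically 0 on [0,1] and \|\theta - \theta^*\|^2 \leq C k^{13/5} \|f_\theta\|^{4/5} for a universal constant C. -/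
/-!
Let `ε = ‖f‖²` and `δ = (ε / k²) ^ (1/5)`. Split the sorted biases into maximal runs whose
consecutive gaps are `< δ`. If a run is followed by a gap `≥ δ`, then `f` is affine on an interval
of length `δ` inside `[0, 1]` right after it, so its slope `s` there satisfies `s² δ³ ≤ 12 ε`.
Move every bias of such a run to the first bias of the run, and change the weights so that their
partial sums vanish at the end of every run: the collapsed network is then identically zero, each
weight moves by a difference of two such slopes and each bias by at most `k δ`. The last run
reaches `1` (after clipping the biases at `1`, which does not change `f` on `[0, 1]`), so it is
pushed to biases `≥ 1` at a cost of at most `k δ` per bias. Altogether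
`‖θ - θ*‖² ≤ k (48 ε / δ³ + k² δ²) = 49 k^(11/5) ε^(2/5)`.
-/

open Set Finset MeasureTheory

noncomputable def reluNet (n : ℕ) (w b : ℕ → ℝ) (x : ℝ) : ℝ :=
  ∑ i ∈ range n, w i * max (x - b i) 0

theorem continuous_reluNet (n : ℕ) (w b : ℕ → ℝ) : Continuous (reluNet n w b) := by
  unfold reluNet
  fun_prop

theorem eqOn_zero_of_integral_sq_eq_zero {f : ℝ → ℝ} {a b : ℝ} (hf : Continuous f) (hab : a < b)
    (h : ∫ x in a..b, f x ^ 2 = 0) : EqOn f 0 (Icc a b) := by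
  have hae : (fun x => f x ^ 2) =ᵐ[volume.restrict (Icc a b)] 0 := by
    rw [← Measure.restrict_congr_set Ioc_ae_eq_Icc]
    exact (intervalIntegral.integral_eq_zero_iff_of_le_of_nonneg_ae hab.le
      (ae_of_all _ fun x => sq_nonneg (f x)) ((hf.pow 2).intervalIntegrable a b)).1 h
  intro x hx
  simpa using Measure.eqOn_Icc_of_ae_eq volume hab.ne hae (hf.pow 2).continuousOn
    continuousOn_const hx

theorem integral_sq_affine (S c u δ : ℝ) :
    ∫ x in u..u + δ, (S * x - c) ^ 2 = S ^ 2 * δ ^ 3 / 12 + δ * (S * (u + δ / 2) - c) ^ 2 := by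
  have hexpand : ∀ x, (S * x - c) ^ 2 = S ^ 2 * x ^ 2 - 2 * S * c * x + c ^ 2 := fun x => by ring
  simp_rw [hexpand]
  rw [intervalIntegral.integral_add, intervalIntegral.integral_sub,
    intervalIntegral.integral_const_mul, intervalIntegral.integral_const_mul, integral_pow,
    integral_id, intervalIntegral.integral_const]
  · simp
    ring
  all_goals exact (by fun_prop : Continuous _).intervalIntegrable _ _

theorem sq_mul_pow_three_le_integral_sq {f : ℝ → ℝ} (hf : Continuous f) {S c u δ : ℝ}
    (hδ : 0 ≤ δ) (hu : 0 ≤ u) (huδ : u + δ ≤ 1) (hlin : ∀ x ∈ Icc u (u + δ), f x = S * x - c) :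
    S ^ 2 * δ ^ 3 ≤ 12 * ∫ x in (0 : ℝ)..1, f x ^ 2 := by
  have hmono : ∫ x in u..u + δ, f x ^ 2 ≤ ∫ x in (0 : ℝ)..1, f x ^ 2 :=
    intervalIntegral.integral_mono_interval hu (by linarith) huδ
      (ae_of_all _ fun x => sq_nonneg _) ((hf.pow 2).intervalIntegrable _ _)
  have hcongr : ∫ x in u..u + δ, f x ^ 2 = ∫ x in u..u + δ, (S * x - c) ^ 2 :=
    intervalIntegral.integral_congr fun x hx => by
      rw [Set.uIcc_of_le (by linarith)] at hx
      simp only [hlin x hx]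
  rw [hcongr, integral_sq_affine] at hmono
  nlinarith [mul_nonneg hδ (sq_nonneg (S * (u + δ / 2) - c))]

theorem sum_range_mul_eq_of_partialSums {R α : Type*} [Semiring R] (w : ℕ → R) (b : ℕ → α)
    (g : α → R) {n : ℕ}
    (h : ∀ j, j + 1 < n → ∑ l ∈ range (j + 1), w l = 0 ∨ b j = b (j + 1)) :
    ∑ i ∈ range n, w i * g (b i) = (∑ l ∈ range n, w l) * g (b (n - 1)) := by
  induction n with
  | zero => simp
  | succ n ih =>
    rw [sum_range_succ, sum_range_succ, ih fun j hj => h j (by omega), Nat.add_sub_cancel]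
    rcases n with _ | j
    · simp
    · rcases h j (by omega) with hsum | hb
      · simp [hsum]
      · rw [Nat.add_sub_cancel, hb, add_mul]

theorem reluNet_eq_of_mem_Icc {c : ℕ → ℝ} (hc : Monotone c) (w : ℕ → ℝ) {n e : ℕ} (he : e < n)
    {x : ℝ} (hx : x ∈ Icc (c e) (c (e + 1))) :
    reluNet n w c x = (∑ i ∈ range (e + 1), w i) * x - ∑ i ∈ range (e + 1), w i * c i := by
  unfold reluNet
  rw [← sum_range_add_sum_Ico _ (show e + 1 ≤ n by omega), sum_eq_zero (s := Ico _ _),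
    add_zero, sum_mul, ← sum_sub_distrib]
  · refine sum_congr rfl fun i hi => ?_
    rw [max_eq_left (by linarith [hc (mem_range_succ_iff.1 hi), hx.1])]
    ring
  · intro i hi
    rw [max_eq_right (by linarith [hc (mem_Ico.1 hi).1, hx.2]), mul_zero]

section Clusters

variable (c : ℕ → ℝ) (δ : ℝ)

-- The first bias of the run containing `i`, runs being maximal blocks of consecutive biases
-- with gaps `< δ`.
noncomputable def clusterStart : ℕ → ℝ
  | 0 => c 0
  | i + 1 => if c (i + 1) - c i < δ then clusterStart i else c (i + 1)

theorem clusterStart_succ_of_lt {i : ℕ} (h : c (i + 1) - c i < δ) :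
    clusterStart c δ (i + 1) = clusterStart c δ i :=
  if_pos h

theorem sub_clusterStart_mem_Icc {c : ℕ → ℝ} (hc : Monotone c) {δ : ℝ} (hδ : 0 ≤ δ) (i : ℕ) :
    c i - clusterStart c δ i ∈ Icc 0 (i * δ) := by
  induction i with
  | zero => simp [clusterStart]
  | succ i ih =>
    simp only [clusterStart]
    split_ifs with h
    · have := hc (Nat.le_succ i)
      constructor <;> push_cast <;> linarith [ih.1, ih.2]
    · simp only [sub_self, Set.mem_Icc, le_refl, true_and]
      positivity

theorem sub_le_mul_of_gaps_lt {i j : ℕ} (hij : i ≤ j)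
    (hgap : ∀ l, i ≤ l → l < j → c (l + 1) - c l < δ) : c j - c i ≤ (j - i : ℕ) * δ := by
  induction j, hij using Nat.le_induction with
  | base => simp
  | succ j hij ih =>
    have := hgap j hij (Nat.lt_succ_self j)
    rw [Nat.sub_add_comm hij]
    push_cast
    linarith [ih fun l h1 h2 => hgap l h1 (by omega)]

theorem exists_lastBoundary (k : ℕ) :
    ∃ m ≤ k, (∀ e, e + 1 = m → δ ≤ c (e + 1) - c e) ∧
      ∀ l, m ≤ l → l < k → c (l + 1) - c l < δ := by
  induction k with
  | zero => exact ⟨0, le_rfl, by simp, by omega⟩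
  | succ k ih =>
    by_cases h : δ ≤ c (k + 1) - c k
    · exact ⟨k + 1, le_rfl, fun e he => by rwa [Nat.succ_injective he], by omega⟩
    · obtain ⟨m, hmk, hm, hgaps⟩ := ih
      refine ⟨m, by omega, hm, fun l h1 h2 => ?_⟩
      rcases Nat.lt_succ_iff_lt_or_eq.1 h2 with hl | rfl
      · exact hgaps l h1 hl
      · exact not_le.1 h

end Clusters

section Collapse

variable (c : ℕ → ℝ) (δ : ℝ) (w : ℕ → ℝ)

-- At `e + 1` after a gap `c (e + 1) - c e ≥ δ`: the slope of the network on `[c e, c (e + 1)]`.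
noncomputable def boundarySlope : ℕ → ℝ
  | 0 => 0
  | e + 1 => if δ ≤ c (e + 1) - c e then ∑ l ∈ range (e + 1), w l else 0

noncomputable def collapsedWeight (i : ℕ) : ℝ :=
  w i - (boundarySlope c δ w (i + 1) - boundarySlope c δ w i)

theorem sum_range_collapsedWeight (n : ℕ) :
    ∑ l ∈ range n, collapsedWeight c δ w l = ∑ l ∈ range n, w l - boundarySlope c δ w n := by
  simp only [collapsedWeight, sum_sub_distrib, sum_range_sub (boundarySlope c δ w)]
  rw [show boundarySlope c δ w 0 = 0 from rfl, sub_zero]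

theorem sum_range_collapsedWeight_eq_zero {n : ℕ} (hn : ∀ e, e + 1 = n → δ ≤ c (e + 1) - c e) :
    ∑ l ∈ range n, collapsedWeight c δ w l = 0 := by
  rw [sum_range_collapsedWeight]
  cases n with
  | zero => simp [boundarySlope]
  | succ e => simp [boundarySlope, hn e rfl]

theorem reluNet_collapsedWeight_clusterStart {m : ℕ}
    (hm : ∀ e, e + 1 = m → δ ≤ c (e + 1) - c e) (x : ℝ) :
    reluNet m (collapsedWeight c δ w) (clusterStart c δ) x = 0 := by
  unfold reluNet
  rw [sum_range_mul_eq_of_partialSums _ _ (fun t => max (x - t) 0) fun j _ => ?_,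
    sum_range_collapsedWeight_eq_zero c δ w hm, zero_mul]
  by_cases h : δ ≤ c (j + 1) - c j
  · exact .inl (sum_range_collapsedWeight_eq_zero c δ w fun e he => by rwa [Nat.succ_injective he])
  · exact .inr (clusterStart_succ_of_lt c δ (not_le.1 h)).symm

variable {c δ}

theorem boundarySlope_sq_le (hc : Monotone c) (hc0 : 0 ≤ c 0) (hc1 : ∀ i, c i ≤ 1) (hδ : 0 < δ)
    {k n : ℕ} (hn : n ≤ k) :
    boundarySlope c δ w n ^ 2 ≤ 12 * (∫ x in (0 : ℝ)..1, reluNet k w c x ^ 2) / δ ^ 3 := by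
  have hint : 0 ≤ ∫ x in (0 : ℝ)..1, reluNet k w c x ^ 2 :=
    intervalIntegral.integral_nonneg zero_le_one fun x _ => sq_nonneg _
  rw [le_div_iff₀ (by positivity)]
  cases n with
  | zero => simpa [boundarySlope] using hint
  | succ e =>
    simp only [boundarySlope]
    split_ifs with h
    · exact sq_mul_pow_three_le_integral_sq (continuous_reluNet k w c) hδ.le
        (hc0.trans (hc (Nat.zero_le e))) (by linarith [hc1 (e + 1)])
        fun x hx => reluNet_eq_of_mem_Icc hc w (by omega) ⟨hx.1, by linarith [hx.2]⟩
    · simpa using hint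

theorem sub_collapsedWeight_sq_le (hc : Monotone c) (hc0 : 0 ≤ c 0) (hc1 : ∀ i, c i ≤ 1)
    (hδ : 0 < δ) {k i : ℕ} (hi : i < k) :
    (w i - collapsedWeight c δ w i) ^ 2 ≤
      48 * (∫ x in (0 : ℝ)..1, reluNet k w c x ^ 2) / δ ^ 3 := by
  have h1 := boundarySlope_sq_le w hc hc0 hc1 hδ (Nat.succ_le_of_lt hi)
  have h2 := boundarySlope_sq_le w hc hc0 hc1 hδ hi.le
  rw [collapsedWeight, sub_sub_cancel, show ∀ X : ℝ, 48 * X / δ ^ 3 = 4 * (12 * X / δ ^ 3) by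
    intro X; ring]
  nlinarith [sq_nonneg (boundarySlope c δ w (i + 1) + boundarySlope c δ w i)]

end Collapse

-- On `[0, 1]` a bias above `1` acts as the bias `1`; padding with `1` makes the last run
-- end at `1`.
noncomputable def clipBias (k : ℕ) (b : ℕ → ℝ) (i : ℕ) : ℝ :=
  if i < k then min (b i) 1 else 1

section Clip

variable {k : ℕ} {b : ℕ → ℝ}

theorem monotone_clipBias (hb : MonotoneOn b (Set.Iio k)) : Monotone (clipBias k b) := by
  intro i j hij
  unfold clipBias
  split_ifs with hi hj hj
  · exact min_le_min_right 1 (hb (lt_of_le_of_lt hij hj) hj hij)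
  · exact min_le_right _ _
  · omega
  · rfl

theorem clipBias_le_one (i : ℕ) : clipBias k b i ≤ 1 := by
  unfold clipBias
  split_ifs
  exacts [min_le_right _ _, le_rfl]

theorem reluNet_clipBias_eqOn (w : ℕ → ℝ) :
    EqOn (reluNet k w b) (reluNet k w (clipBias k b)) (Icc 0 1) := by
  intro x hx
  refine sum_congr rfl fun i hi => ?_
  rw [clipBias, if_pos (mem_range.1 hi)]
  rcases le_total (b i) 1 with h | h
  · rw [min_eq_left h]
  · rw [min_eq_right h, max_eq_right (by linarith [hx.2]), max_eq_right (by linarith [hx.2])]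

theorem clipBias_eq_of_lt_one {i : ℕ} (hi : i < k) (h : clipBias k b i < 1) :
    clipBias k b i = b i := by
  rw [clipBias, if_pos hi] at h ⊢
  exact min_eq_left (min_lt_iff.1 h |>.resolve_right (lt_irrefl 1)).le

theorem max_one_sub_eq_one_sub_clipBias {i : ℕ} (hi : i < k) :
    max (b i) 1 - b i = 1 - clipBias k b i := by
  rw [clipBias, if_pos hi]
  linarith [min_add_max (b i) 1]

end Clip

theorem exists_reluNet_eqOn_zero_near {k : ℕ} (w b : ℕ → ℝ) (hb : MonotoneOn b (Set.Iio k))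
    (hb0 : ∀ i < k, 0 ≤ b i) {δ : ℝ} (hδ : 0 < δ) :
    ∃ w' b' : ℕ → ℝ, EqOn (reluNet k w' b') 0 (Icc 0 1) ∧ ∀ i < k,
      (w i - w' i) ^ 2 ≤ 48 * (∫ x in (0 : ℝ)..1, reluNet k w b x ^ 2) / δ ^ 3 ∧
      (b i - b' i) ^ 2 ≤ (k * δ) ^ 2 := by
  set c := clipBias k b
  have hc : Monotone c := monotone_clipBias hb
  have hc0 : 0 ≤ c 0 := by
    simp only [c, clipBias]
    split_ifs with hk
    exacts [le_min (hb0 0 hk) zero_le_one, zero_le_one]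
  have hint : ∫ x in (0 : ℝ)..1, reluNet k w b x ^ 2 = ∫ x in (0 : ℝ)..1, reluNet k w c x ^ 2 :=
    intervalIntegral.integral_congr fun x hx => by
      rw [Set.uIcc_of_le zero_le_one] at hx
      rw [reluNet_clipBias_eqOn w hx]
  have hint0 : 0 ≤ ∫ x in (0 : ℝ)..1, reluNet k w c x ^ 2 :=
    intervalIntegral.integral_nonneg zero_le_one fun x _ => sq_nonneg _
  obtain ⟨m, hmk, hm, htail⟩ := exists_lastBoundary c δ k
  refine ⟨fun i => if i < m then collapsedWeight c δ w i else w i,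
    fun i => if i < m then clusterStart c δ i else max (b i) 1, fun x hx => ?_, fun i hi => ?_⟩
  · rw [Pi.zero_apply, reluNet, ← sum_range_add_sum_Ico _ hmk,
      sum_eq_zero (s := Ico m k) fun i hi => ?_, add_zero]
    · refine (sum_congr rfl fun i hi => ?_).trans (reluNet_collapsedWeight_clusterStart c δ w hm x)
      simp only [if_pos (mem_range.1 hi)]
    · have him : ¬i < m := not_lt.2 (mem_Ico.1 hi).1
      rw [if_neg him, if_neg him, max_eq_right (by linarith [hx.2, le_max_right (b i) 1]), mul_zero]
  rw [hint]
  by_cases him : i < m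
  · simp only [if_pos him]
    obtain ⟨e, rfl⟩ : ∃ e, m = e + 1 := Nat.exists_eq_add_one.2 (by omega)
    have hbi : c i = b i := clipBias_eq_of_lt_one hi <| by
      linarith [hc (Nat.lt_succ_iff.1 him), hm e rfl, clipBias_le_one (k := k) (b := b) (e + 1)]
    have hs := sub_clusterStart_mem_Icc hc hδ.le i
    refine ⟨sub_collapsedWeight_sq_le w hc hc0 clipBias_le_one hδ hi, ?_⟩
    rw [← hbi]
    exact pow_le_pow_left₀ hs.1 (hs.2.trans (by gcongr)) 2
  · simp only [if_neg him]
    refine ⟨by rw [sub_self, sq, zero_mul]; positivity, ?_⟩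
    have hgap := sub_le_mul_of_gaps_lt c δ hi.le fun l h1 h2 => htail l (by omega) h2
    rw [show c k = 1 by simp [c, clipBias]] at hgap
    rw [← neg_sub, neg_sq, max_one_sub_eq_one_sub_clipBias hi]
    refine pow_le_pow_left₀ (sub_nonneg.2 (clipBias_le_one i)) (hgap.trans ?_) 2
    gcongr
    exact_mod_cast Nat.sub_le k i

theorem exists_network_eqOn_zero_near {k : ℕ} (w b : Fin k → ℝ) (hb0 : ∀ i, 0 ≤ b i)
    (hb : Monotone b) {δ : ℝ} (hδ : 0 < δ) :
    ∃ w' b' : Fin k → ℝ, (∀ x ∈ Icc (0 : ℝ) 1, ∑ i, w' i * max (x - b' i) 0 = 0) ∧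
      ∑ i, ((w i - w' i) ^ 2 + (b i - b' i) ^ 2) ≤
        k * (48 * (∫ x in (0 : ℝ)..1, (∑ i, w i * max (x - b i) 0) ^ 2) / δ ^ 3 + (k * δ) ^ 2) := by
  set W : ℕ → ℝ := fun i => if h : i < k then w ⟨i, h⟩ else 0
  set B : ℕ → ℝ := fun i => if h : i < k then b ⟨i, h⟩ else 0
  have hnet : ∀ x, ∑ i, w i * max (x - b i) 0 = reluNet k W B x := fun x => by
    simp [reluNet, ← Fin.sum_univ_eq_sum_range, W, B]
  have hB : MonotoneOn B (Set.Iio k) := fun i hi j hj hij => by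
    simpa [B, show i < k from hi, show j < k from hj] using
      hb (show (⟨i, hi⟩ : Fin k) ≤ ⟨j, hj⟩ from hij)
  obtain ⟨w', b', hzero, hnear⟩ :=
    exists_reluNet_eqOn_zero_near W B hB (fun i hi => by simpa [B, hi] using hb0 ⟨i, hi⟩) hδ
  refine ⟨fun i => w' i, fun i => b' i, fun x hx => ?_, ?_⟩
  · rw [Fin.sum_univ_eq_sum_range (fun i => w' i * max (x - b' i) 0)]
    exact hzero hx
  · simp_rw [hnet]
    calc ∑ i : Fin k, ((w i - w' i) ^ 2 + (b i - b' i) ^ 2)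
        ≤ ∑ _i : Fin k, (48 * (∫ x in (0 : ℝ)..1, reluNet k W B x ^ 2) / δ ^ 3 + (k * δ) ^ 2) :=
          sum_le_sum fun i _ => by
            simpa [W, B] using add_le_add (hnear i i.isLt).1 (hnear i i.isLt).2
      _ = _ := by rw [sum_const, card_univ, Fintype.card_fin, nsmul_eq_mul]

theorem exists_pos_cost_le (k : ℕ) {ε : ℝ} (hε : 0 < ε) :
    ∃ δ > 0, k * (48 * ε / δ ^ 3 + (k * δ) ^ 2) ≤
      49 * (k : ℝ) ^ ((13 : ℝ) / 5) * ε ^ ((2 : ℝ) / 5) := by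
  rcases k.eq_zero_or_pos with rfl | hk
  · exact ⟨1, one_pos, by simp⟩
  have hroot : ∀ {a : ℝ}, 0 ≤ a → ∀ n : ℕ, a ^ ((n : ℝ) / 5) = (a ^ ((1 : ℝ) / 5)) ^ n :=
    fun ha n => by rw [← Real.rpow_natCast, ← Real.rpow_mul ha]; ring_nf
  have hk0 : (0 : ℝ) ≤ k := k.cast_nonneg
  obtain ⟨t, ht, hεt, hεt2⟩ : ∃ t > 0, ε = t ^ 5 ∧ ε ^ ((2 : ℝ) / 5) = t ^ 2 :=
    ⟨ε ^ ((1 : ℝ) / 5), by positivity, by simpa using hroot hε.le 5, by simpa using hroot hε.le 2⟩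
  obtain ⟨κ, hκ, hkκ, hkκ13⟩ : ∃ κ ≥ 1, (k : ℝ) = κ ^ 5 ∧ (k : ℝ) ^ ((13 : ℝ) / 5) = κ ^ 13 :=
    ⟨(k : ℝ) ^ ((1 : ℝ) / 5), Real.one_le_rpow (Nat.one_le_cast.2 hk) (by norm_num),
      by simpa using hroot hk0 5, by simpa using hroot hk0 13⟩
  refine ⟨t / κ ^ 2, by positivity, ?_⟩
  rw [hεt2, hkκ13, hkκ, hεt]
  calc κ ^ 5 * (48 * t ^ 5 / (t / κ ^ 2) ^ 3 + (κ ^ 5 * (t / κ ^ 2)) ^ 2)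
        = 49 * κ ^ 11 * t ^ 2 := by
        field_simp
        ring
    _ ≤ 49 * κ ^ 13 * t ^ 2 := by gcongr; norm_num

theorem stmt_13 :
    ∃ C : ℝ, 0 < C ∧
      ∀ (k : ℕ) (w b : Fin k → ℝ),
        (∀ i, 0 ≤ b i) → (∀ i j : Fin k, i ≤ j → b i ≤ b j) →
        (∫ x in (0:ℝ)..1, (∑ i, w i * max (x - b i) 0) ^ 2) < 1 / (12 * (k + 1) ^ 5) →
        ∃ w' b' : Fin k → ℝ,
          (∀ x ∈ Set.Icc (0:ℝ) 1, ∑ i, w' i * max (x - b' i) 0 = 0) ∧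
          (∑ i, ((w i - w' i) ^ 2 + (b i - b' i) ^ 2)) ≤
            C * (k : ℝ) ^ ((13 : ℝ) / 5) *
              (∫ x in (0:ℝ)..1, (∑ i, w i * max (x - b i) 0) ^ 2) ^ ((2 : ℝ) / 5) := by
  refine ⟨49, by norm_num, fun k w b hb0 hb _ => ?_⟩
  have hcont : Continuous fun x : ℝ => ∑ i, w i * max (x - b i) 0 := by fun_prop
  rcases (intervalIntegral.integral_nonneg zero_le_one fun x _ => sq_nonneg _ :
    0 ≤ ∫ x in (0 : ℝ)..1, (∑ i, w i * max (x - b i) 0) ^ 2).eq_or_lt with hε | hε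
  · refine ⟨w, b, fun x hx => eqOn_zero_of_integral_sq_eq_zero hcont zero_lt_one hε.symm hx, ?_⟩
    rw [← hε, Real.zero_rpow (by norm_num)]
    simp
  · obtain ⟨δ, hδ, hcost⟩ := exists_pos_cost_le k hε
    obtain ⟨w', b', hzero, hnear⟩ := exists_network_eqOn_zero_near w b hb0 hb hδ
    exact ⟨w', b', hzero, hnear.trans hcost⟩
end

section
/- Let q(\kappa, \sigma_w, \epsilon) be the probability that a vector w = (w_0,...,w_{d-1}) of i.i.d. N(0, \sigma_w^2) entries satisfies (1/2)((w_0 - \kappa)^2 + \sum_{i=1}^{d-1} w_i^2) \leq \epsilon^2. Then q satisfies the scaling property q(\kappa, \sigma_w, \epsilon) = q(1, \sigma_w/\kappa, \epsilon/\kappa) for all \kappa > 0, and the limit lim_{\epsilon \to 0} log(q(\kappa, \sigma_w, \epsilon)) / log(\epsilon) = d. -/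
open MeasureTheory ProbabilityTheory Filter

/-- The probability `q(κ, σ_w, ε)` that a vector of `d` i.i.d. `N(0, σ_w²)` entries
satisfies `(1/2)((w₀ - κ)² + ∑_{i=1}^{d-1} wᵢ²) ≤ ε²`. -/
noncomputable def qProb (d : ℕ) (κ σw ε : ℝ) : ℝ :=
  ((Measure.pi fun _ : Fin d => gaussianReal 0 (σw ^ 2).toNNReal)
    {w : Fin d → ℝ |
      (1 / 2) * ∑ i, (w i - if (i : ℕ) = 0 then κ else 0) ^ 2 ≤ ε ^ 2}).toReal

/-
Substituting `w = κ • w'` turns the event for `(κ, σ_w, ε)` into the event for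
`(1, σ_w / κ, ε / κ)`, and maps `N(0, (σ_w/κ)²)ᵈ` to `N(0, σ_w²)ᵈ`.

For the limit, the event is the Euclidean ball of radius `√2 ε` about `(κ, 0, …, 0)`, which
contains the sup-norm ball of radius `√2 ε / √d` and is contained in the one of radius `√2 ε`.
On a sup-norm ball of radius `r ≤ √2` the product Gaussian has mass between two positive
multiples of `rᵈ`, because there the density is bounded above and below. Hence
`c₁ εᵈ ≤ q(ε) ≤ c₂ εᵈ`, and `log q(ε) / log ε → d` since `log cᵢ / log ε → 0`.
-/

open Real Metric Topology
open scoped NNReal ENNReal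

section GaussianDensity

variable {v : ℝ≥0}

lemma gaussianPDFReal_le (μ x : ℝ) :
    gaussianPDFReal μ v x ≤ (√(2 * π * v))⁻¹ := by
  rw [gaussianPDFReal]
  refine mul_le_of_le_one_right (by positivity) (exp_le_one_iff.2 ?_)
  rw [neg_div]
  exact neg_nonpos.2 (by positivity)

lemma mul_exp_le_gaussianPDFReal {R x : ℝ} (hx : ‖x‖ ≤ R) :
    (√(2 * π * v))⁻¹ * exp (-R ^ 2 / (2 * v)) ≤ gaussianPDFReal 0 v x := by
  rw [gaussianPDFReal, sub_zero]
  gcongr _ * exp (-?_ / _)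
  exact sq_le_sq' (abs_le.1 hx).1 (abs_le.1 hx).2

lemma gaussianReal_le_ofReal_mul_volume (μ : ℝ) (hv : v ≠ 0) (s : Set ℝ) :
    gaussianReal μ v s ≤ ENNReal.ofReal (√(2 * π * v))⁻¹ * volume s := by
  rw [gaussianReal_apply μ hv, ← setLIntegral_const]
  exact lintegral_mono fun x => ENNReal.ofReal_le_ofReal (gaussianPDFReal_le μ x)

lemma ofReal_mul_volume_le_gaussianReal (hv : v ≠ 0) {R : ℝ} {s : Set ℝ} (hs : MeasurableSet s)
    (hsR : s ⊆ closedBall 0 R) :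
    ENNReal.ofReal ((√(2 * π * v))⁻¹ * exp (-R ^ 2 / (2 * v))) * volume s
      ≤ gaussianReal 0 v s := by
  rw [gaussianReal_apply 0 hv, ← setLIntegral_const]
  exact setLIntegral_mono' hs fun x hx =>
    ENNReal.ofReal_le_ofReal (mul_exp_le_gaussianPDFReal (mem_closedBall_zero_iff.1 (hsR hx)))

end GaussianDensity

section Product

variable {ι : Type*} [Fintype ι] {v : ℝ≥0}

lemma pi_gaussianReal_closedBall_le (μ : ℝ) (hv : v ≠ 0) (m : ι → ℝ) {r : ℝ} (hr : 0 ≤ r) :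
    Measure.pi (fun _ : ι => gaussianReal μ v) (closedBall m r)
      ≤ ENNReal.ofReal ((√(2 * π * v))⁻¹ * (2 * r)) ^ Fintype.card ι := by
  rw [closedBall_pi m hr, Measure.pi_pi, ← Finset.card_univ, ← Finset.prod_const]
  gcongr with i
  rw [ENNReal.ofReal_mul (by positivity), ← Real.volume_closedBall (m i) r]
  exact gaussianReal_le_ofReal_mul_volume μ hv _

lemma le_pi_gaussianReal_closedBall (hv : v ≠ 0) {m : ι → ℝ} {r R : ℝ} (hr : 0 ≤ r)
    (hR : ‖m‖ + r ≤ R) :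
    ENNReal.ofReal ((√(2 * π * v))⁻¹ * exp (-R ^ 2 / (2 * v)) * (2 * r)) ^ Fintype.card ι
      ≤ Measure.pi (fun _ : ι => gaussianReal 0 v) (closedBall m r) := by
  rw [closedBall_pi m hr, Measure.pi_pi, ← Finset.card_univ, ← Finset.prod_const]
  gcongr with i
  rw [ENNReal.ofReal_mul (by positivity), ← Real.volume_closedBall (m i) r]
  refine ofReal_mul_volume_le_gaussianReal hv measurableSet_closedBall
    (closedBall_subset_closedBall' ?_)
  rw [dist_zero_right, add_comm]
  exact (add_le_add_left (norm_le_pi_norm m i) r).trans hR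

lemma measurePreserving_const_mul_pi_gaussianReal (c : ℝ) :
    MeasurePreserving (fun (w : ι → ℝ) i => c * w i) (Measure.pi fun _ : ι => gaussianReal 0 v)
      (Measure.pi fun _ : ι => gaussianReal 0 (NNReal.mk (c ^ 2) (sq_nonneg c) * v)) := by
  refine measurePreserving_pi _ _ fun _ => ⟨measurable_const_mul c, ?_⟩
  rw [gaussianReal_map_const_mul, mul_zero]

lemma closedBall_subset_setOf_sum_sq_le (m : ι → ℝ) {ρ : ℝ} :
    closedBall m (ρ / √(Fintype.card ι)) ⊆ {w | ∑ i, (w i - m i) ^ 2 ≤ ρ ^ 2} := by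
  intro w hw
  set n : ℝ := (Fintype.card ι : ℝ)
  have hcoord (i : ι) : (w i - m i) ^ 2 ≤ (ρ / √n) ^ 2 := by
    refine sq_le_sq.2 ((le_abs_self _).trans' ?_)
    rw [← Real.dist_eq]
    exact (dist_le_pi_dist w m i).trans hw
  calc ∑ i, (w i - m i) ^ 2 ≤ ∑ _i : ι, (ρ / √n) ^ 2 := Finset.sum_le_sum fun i _ => hcoord i
    _ = n * (ρ ^ 2 / n) := by simp [n, div_pow]
    _ ≤ ρ ^ 2 := by
      rcases eq_or_ne n 0 with hn | hn
      · simp [hn, sq_nonneg]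
      · rw [mul_div_cancel₀ _ hn]

lemma setOf_sum_sq_le_subset_closedBall (m : ι → ℝ) {ρ : ℝ} (hρ : 0 ≤ ρ) :
    {w | ∑ i, (w i - m i) ^ 2 ≤ ρ ^ 2} ⊆ closedBall m ρ := by
  intro w hw
  rw [mem_closedBall_iff_norm, pi_norm_le_iff_of_nonneg hρ]
  intro i
  refine abs_le_of_sq_le_sq ?_ hρ
  exact (Finset.single_le_sum (fun j _ => sq_nonneg (w j - m j)) (Finset.mem_univ i)).trans hw

lemma preimage_const_mul_setOf_sum_sq_le {c : ℝ} (hc : c ≠ 0) (m : ι → ℝ) (ρ : ℝ) :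
    (fun (w : ι → ℝ) i => c * w i) ⁻¹' {w | ∑ i, (w i - m i) ^ 2 ≤ ρ ^ 2}
      = {w | ∑ i, (w i - c⁻¹ * m i) ^ 2 ≤ (ρ / c) ^ 2} := by
  ext w
  have hsum : ∑ i, (c * w i - m i) ^ 2 = c ^ 2 * ∑ i, (w i - c⁻¹ * m i) ^ 2 := by
    rw [Finset.mul_sum]
    exact Finset.sum_congr rfl fun i _ => by field_simp
  simp only [Set.mem_preimage, Set.mem_ofPred_eq, hsum, div_pow]
  rw [le_div_iff₀ (by positivity), mul_comm]

end Product

def qCenter (d : ℕ) (κ : ℝ) : Fin d → ℝ := fun i => if (i : ℕ) = 0 then κ else 0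

lemma norm_qCenter_le (d : ℕ) (κ : ℝ) : ‖qCenter d κ‖ ≤ |κ| := by
  refine (pi_norm_le_iff_of_nonneg (abs_nonneg κ)).2 fun i => ?_
  unfold qCenter
  split_ifs <;> simp

lemma qProb_eq_measure_setOf_sum_sq_le (d : ℕ) (κ σw ε : ℝ) :
    qProb d κ σw ε = (Measure.pi (fun _ : Fin d => gaussianReal 0 (σw ^ 2).toNNReal)
      {w | ∑ i, (w i - qCenter d κ i) ^ 2 ≤ (√2 * ε) ^ 2}).toReal := by
  unfold qProb qCenter
  congr 2
  ext w
  simp only [Set.mem_ofPred_eq, mul_pow, Real.sq_sqrt zero_le_two]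
  constructor <;> intro h <;> linarith

lemma qProb_eq_qProb_one (d : ℕ) {κ : ℝ} (hκ : κ ≠ 0) (σw ε : ℝ) :
    qProb d κ σw ε = qProb d 1 (σw / κ) (ε / κ) := by
  have hvar : NNReal.mk (κ ^ 2) (sq_nonneg κ) * ((σw / κ) ^ 2).toNNReal = (σw ^ 2).toNNReal := by
    rw [← NNReal.coe_inj, NNReal.coe_mul, NNReal.coe_mk, Real.coe_toNNReal _ (sq_nonneg _),
      Real.coe_toNNReal _ (sq_nonneg _)]
    field_simp
  have hcenter (i : Fin d) : κ⁻¹ * qCenter d κ i = qCenter d 1 i := by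
    simp [qCenter, hκ]
  rw [qProb_eq_measure_setOf_sum_sq_le, qProb_eq_measure_setOf_sum_sq_le, ← hvar,
    ← (measurePreserving_const_mul_pi_gaussianReal κ).measure_preimage
      (measurableSet_le (by fun_prop) measurable_const).nullMeasurableSet,
    preimage_const_mul_setOf_sum_sq_le hκ, mul_div_assoc]
  simp only [hcenter]

lemma exists_qProb_le_mul_pow (d : ℕ) (κ : ℝ) {σw : ℝ} (hσ : σw ≠ 0) :
    ∃ c > 0, ∀ ε, 0 ≤ ε → qProb d κ σw ε ≤ c * ε ^ d := by
  set v := (σw ^ 2).toNNReal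
  have hv : v ≠ 0 := by simpa [v] using hσ
  refine ⟨((√(2 * π * v))⁻¹ * (2 * √2)) ^ d, by positivity, fun ε hε => ?_⟩
  have hball : Measure.pi (fun _ : Fin d => gaussianReal 0 v)
      {w | ∑ i, (w i - qCenter d κ i) ^ 2 ≤ (√2 * ε) ^ 2}
        ≤ ENNReal.ofReal (((√(2 * π * v))⁻¹ * (2 * (√2 * ε))) ^ d) := by
    have hr : 0 ≤ √2 * ε := by positivity
    have hpi := pi_gaussianReal_closedBall_le 0 hv (qCenter d κ) hr
    rw [Fintype.card_fin] at hpi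
    rw [ENNReal.ofReal_pow (by positivity)]
    exact (measure_mono (setOf_sum_sq_le_subset_closedBall _ hr)).trans hpi
  rw [qProb_eq_measure_setOf_sum_sq_le]
  refine (ENNReal.toReal_le_of_le_ofReal (by positivity) hball).trans_eq ?_
  ring

lemma exists_mul_pow_le_qProb {d : ℕ} (hd : 1 ≤ d) (κ : ℝ) {σw : ℝ} (hσ : σw ≠ 0) :
    ∃ c > 0, ∀ ε ∈ Set.Icc (0 : ℝ) 1, c * ε ^ d ≤ qProb d κ σw ε := by
  set v := (σw ^ 2).toNNReal
  have hv : v ≠ 0 := by simpa [v] using hσ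
  set a := (√(2 * π * v))⁻¹ * exp (-(|κ| + √2) ^ 2 / (2 * v))
  have hsqrt_d : 1 ≤ √(d : ℝ) := Real.one_le_sqrt.2 (by exact_mod_cast hd)
  refine ⟨(a * (2 * (√2 / √d))) ^ d, by positivity, fun ε ⟨hε₀, hε₁⟩ => ?_⟩
  have hr : √2 * ε / √d ≤ √2 := calc
    √2 * ε / √d ≤ √2 * ε := div_le_self (by positivity) hsqrt_d
    _ ≤ √2 := mul_le_of_le_one_right (by positivity) hε₁
  have hball : ENNReal.ofReal ((a * (2 * (√2 * ε / √d))) ^ d)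
      ≤ Measure.pi (fun _ : Fin d => gaussianReal 0 v)
          {w | ∑ i, (w i - qCenter d κ i) ^ 2 ≤ (√2 * ε) ^ 2} := by
    have hpi := le_pi_gaussianReal_closedBall hv (m := qCenter d κ) (r := √2 * ε / √d)
      (by positivity) (add_le_add (norm_qCenter_le d κ) hr)
    have hsub := closedBall_subset_setOf_sum_sq_le (qCenter d κ) (ρ := √2 * ε)
    rw [Fintype.card_fin] at hpi hsub
    rw [ENNReal.ofReal_pow (by positivity)]
    exact hpi.trans (measure_mono hsub)
  rw [qProb_eq_measure_setOf_sum_sq_le]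
  refine le_of_eq_of_le ?_ ((ENNReal.ofReal_le_iff_le_toReal (measure_ne_top _ _)).1 hball)
  ring

lemma tendsto_log_const_mul_pow_div_log {c : ℝ} (hc : 0 < c) (n : ℕ) :
    Tendsto (fun ε => log (c * ε ^ n) / log ε) (𝓝[>] 0) (𝓝 (n : ℝ)) := by
  have hlim : Tendsto (fun ε => log c * (log ε)⁻¹ + n) (𝓝[>] 0) (𝓝 (log c * 0 + n)) :=
    ((tendsto_log_nhdsGT_zero.inv_tendsto_atBot).const_mul _).add_const _
  rw [mul_zero, zero_add] at hlim
  refine hlim.congr' ?_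
  filter_upwards [Ioo_mem_nhdsGT zero_lt_one] with ε ⟨hε₀, hε₁⟩
  have hlog : log ε ≠ 0 := (log_neg hε₀ hε₁).ne
  rw [log_mul hc.ne' (by positivity), log_pow]
  field_simp

lemma tendsto_log_div_log_of_mul_pow_le_of_le_mul_pow {f : ℝ → ℝ} {c₁ c₂ : ℝ} {n : ℕ}
    (hc₁ : 0 < c₁) (hc₂ : 0 < c₂)
    (hf : ∀ᶠ ε in 𝓝[>] 0, c₁ * ε ^ n ≤ f ε ∧ f ε ≤ c₂ * ε ^ n) :
    Tendsto (fun ε => log (f ε) / log ε) (𝓝[>] 0) (𝓝 (n : ℝ)) := by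
  refine tendsto_of_tendsto_of_tendsto_of_le_of_le' (tendsto_log_const_mul_pow_div_log hc₂ n)
    (tendsto_log_const_mul_pow_div_log hc₁ n) ?_ ?_ <;>
  filter_upwards [hf, Ioo_mem_nhdsGT zero_lt_one] with ε ⟨hlow, hup⟩ ⟨hε₀, hε₁⟩
  · have hf_pos : 0 < f ε := hlow.trans_lt' (by positivity)
    exact div_le_div_of_nonpos_of_le (log_neg hε₀ hε₁).le (log_le_log hf_pos hup)
  · exact div_le_div_of_nonpos_of_le (log_neg hε₀ hε₁).le (log_le_log (by positivity) hlow)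

theorem stmt_19 (d : ℕ) (hd : 1 ≤ d) (κ σw : ℝ) (hκ : 0 < κ) (hσ : 0 < σw) :
    (∀ ε ∈ Set.Ioc (0:ℝ) 1, qProb d κ σw ε = qProb d 1 (σw / κ) (ε / κ)) ∧
    Tendsto (fun ε : ℝ => Real.log (qProb d κ σw ε) / Real.log ε)
      (nhdsWithin 0 (Set.Ioi 0)) (nhds (d : ℝ)) := by
  refine ⟨fun ε _ => qProb_eq_qProb_one d hκ.ne' σw ε, ?_⟩
  obtain ⟨c₁, hc₁, hlow⟩ := exists_mul_pow_le_qProb hd κ hσ.ne'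
  obtain ⟨c₂, hc₂, hup⟩ := exists_qProb_le_mul_pow d κ hσ.ne'
  refine tendsto_log_div_log_of_mul_pow_le_of_le_mul_pow hc₁ hc₂ ?_
  filter_upwards [Ioc_mem_nhdsGT zero_lt_one] with ε hε
  exact ⟨hlow ε (Set.Ioc_subset_Icc_self hε), hup ε hε.1.le⟩
end
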